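/- Let β ∈ K with ‖β − b₁‖ < 1/(4√2). (1) If D_r(y) ⊆ Ψ_k and r ≤ √2·ρ_k², then R_β(D_r(y)) = D_{2rρ_k²}(R_β(y)); if instead D_r(y) ⊆ Ψ_k and r > √2·ρ_k², then R_β(D_r(y)) = D_{√2·r²}(R_β(y)). (2) If D_r(y) ⊆ D_{1/√2}(1), then R_β(D_r(y)) = D_r(R_β(y)). (3) If D_r(y) ⊆ D_{1/2}(0), then R_β(D_r(y)) = D_{2r}(R_β(y)). -/

import Mathlib

/-- The sequence `ρ_k = 2^(1/2^k − 3/2)`. -/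
noncomputable def rhoSeq (k : ℕ) : ℝ := (2 : ℝ) ^ ((1 : ℝ) / 2 ^ k - 3 / 2)

section Helpers

variable {K : Type*} [NormedField K] [IsUltrametricDist K]

lemma my_add_eq_left {x y : K} (h : ‖y‖ < ‖x‖) : ‖x + y‖ = ‖x‖ := by
  refine le_antisymm ((IsUltrametricDist.norm_add_le_max x y).trans (by simp [h.le])) ?_
  by_contra hlt
  push_neg at hlt
  have := IsUltrametricDist.norm_add_le_max (x + y) (-y)
  simp only [add_neg_cancel_right, norm_neg] at this
  exact absurd this (not_le.mpr (max_lt hlt h))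

lemma my_add_eq_right {x y : K} (h : ‖x‖ < ‖y‖) : ‖x + y‖ = ‖y‖ := by
  rw [add_comm]; exact my_add_eq_left h

lemma my_sub_eq_left {x y : K} (h : ‖y‖ < ‖x‖) : ‖x - y‖ = ‖x‖ := by
  rw [sub_eq_add_neg, my_add_eq_left (by simpa)]

lemma my_sub_eq_right {x y : K} (h : ‖x‖ < ‖y‖) : ‖x - y‖ = ‖y‖ := by
  rw [norm_sub_rev]; exact my_sub_eq_left h

lemma my_norm_sub_le_max (x y : K) : ‖x - y‖ ≤ max ‖x‖ ‖y‖ := by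
  rw [sub_eq_add_neg]
  simpa using IsUltrametricDist.norm_add_le_max x (-y)

lemma my_pick_root {M r : ℝ} {s₁ s₂ : K} (hM : 0 < M) (hsum : M ≤ ‖s₁ + s₂‖)
    (hprod : ‖s₁ * s₂‖ < r * M) : ‖s₁‖ < r ∨ ‖s₂‖ < r := by
  have hmax : M ≤ max ‖s₁‖ ‖s₂‖ := hsum.trans (IsUltrametricDist.norm_add_le_max s₁ s₂)
  rw [norm_mul] at hprod
  rcases le_total ‖s₁‖ ‖s₂‖ with h | h
  · left
    have h2 : M ≤ ‖s₂‖ := by rw [max_eq_right h] at hmax; exact hmax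
    nlinarith [norm_nonneg s₁]
  · right
    have h2 : M ≤ ‖s₁‖ := by rw [max_eq_left h] at hmax; exact hmax
    nlinarith [norm_nonneg s₂]

lemma my_pick_root_sq {r : ℝ} {s₁ s₂ : K} (hr : 0 < r)
    (hprod : ‖s₁ * s₂‖ < r ^ 2) : ‖s₁‖ < r ∨ ‖s₂‖ < r := by
  by_contra h
  push_neg at h
  rw [norm_mul] at hprod
  nlinarith [h.1, h.2]

lemma my_quad_roots {F : Type*} [Field F] [IsAlgClosed F] (h2 : (2:F) ≠ 0) (S P : F) :
    ∃ z₁ z₂ : F, z₁ + z₂ = S ∧ z₁ * z₂ = P := by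
  obtain ⟨s, hs⟩ := IsAlgClosed.exists_pow_nat_eq (S ^ 2 - 4 * P) zero_lt_two
  exact ⟨(S + s) / 2, (S - s) / 2, by field_simp; ring, by field_simp; linear_combination -hs⟩

lemma my_dense {K : Type*} [NormedField K] [IsAlgClosed K] (h2 : ‖(2:K)‖ = 1/2)
    {s t : ℝ} (hs : 0 < s) (hst : s < t) : ∃ x : K, s < ‖x‖ ∧ ‖x‖ < t := by
  obtain ⟨q, hq1, hq2⟩ := exists_rat_btwn (Real.logb_lt_logb one_lt_two hs hst)
  obtain ⟨x, hx⟩ := IsAlgClosed.exists_pow_nat_eq ((2:K) ^ (-q.num) : K) q.pos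
  have h2K : ‖(2:K)‖ = ((2:ℝ))⁻¹ := by rw [h2]; norm_num
  have hnx : ‖x‖ ^ (q.den : ℕ) = (2:ℝ) ^ (q.num) := by
    rw [← norm_pow, hx, norm_zpow, h2K, inv_zpow, ← zpow_neg, neg_neg]
  have hxnn : (0:ℝ) ≤ ‖x‖ := norm_nonneg x
  have hxval : ‖x‖ = (2:ℝ) ^ ((q:ℝ)) := by
    have h1 : ‖x‖ = (‖x‖ ^ (q.den : ℕ)) ^ ((q.den : ℝ)⁻¹) :=
      (Real.pow_rpow_inv_natCast hxnn q.den_nz).symm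
    rw [h1, hnx, ← Real.rpow_intCast (2:ℝ) q.num, ← Real.rpow_mul (by norm_num)]
    congr 1
    rw [Rat.cast_def]
    ring
  refine ⟨x, ?_, ?_⟩
  · calc s = (2:ℝ) ^ Real.logb 2 s := (Real.rpow_logb two_pos (by norm_num) hs).symm
      _ < ‖x‖ := by rw [hxval]; exact Real.rpow_lt_rpow_left_iff one_lt_two |>.mpr hq1
  · calc ‖x‖ = (2:ℝ) ^ ((q:ℝ)) := hxval
      _ < (2:ℝ) ^ Real.logb 2 t := Real.rpow_lt_rpow_left_iff one_lt_two |>.mpr hq2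
      _ = t := Real.rpow_logb two_pos (by norm_num) (hs.trans hst)

lemma rho_gt (k : ℕ) (hk : 1 ≤ k) : 1 / (2 * Real.sqrt 2) < rhoSeq k := by
  have h32 : (2:ℝ) ^ (-(3/2) : ℝ) = 1 / (2 * Real.sqrt 2) := by
    rw [Real.rpow_neg (by norm_num)]
    rw [show (3/2 : ℝ) = 1 + 1/2 by norm_num, Real.rpow_add two_pos, Real.rpow_one,
      ← Real.sqrt_eq_rpow]
    norm_num
  rw [← h32, rhoSeq]
  apply Real.rpow_lt_rpow_left_iff one_lt_two |>.mpr
  have : (0:ℝ) < 1 / 2 ^ k := by positivity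
  linarith

lemma rho_le (k : ℕ) (hk : 1 ≤ k) : rhoSeq k ≤ 1 / 2 := by
  have h1 : (2:ℝ) ^ (-(1:ℝ)) = 1 / 2 := by
    rw [Real.rpow_neg (by norm_num), Real.rpow_one]; norm_num
  rw [← h1, rhoSeq]
  apply Real.rpow_le_rpow_left_iff one_lt_two |>.mpr
  have h2k : (2:ℝ) ≤ 2 ^ k := by
    calc (2:ℝ) = 2 ^ 1 := (pow_one 2).symm
    _ ≤ 2 ^ k := pow_le_pow_right₀ one_le_two hk
  have : (1:ℝ) / 2 ^ k ≤ 1 / 2 := div_le_div_of_nonneg_left one_pos.le two_pos h2k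
  linarith

end Helpers

set_option maxHeartbeats 2000000 in
/-- For `‖β − b₁‖ < 1/(4√2)`:
(1) if `D_r(y) ⊆ Ψ_k` and `r ≤ √2·ρ_k²` then `R_β(D_r(y)) = D_{2rρ_k²}(R_β(y))`, while if
`r > √2·ρ_k²` then `R_β(D_r(y)) = D_{√2·r²}(R_β(y))`;
(2) if `D_r(y) ⊆ D_{1/√2}(1)` then `R_β(D_r(y)) = D_r(R_β(y))`;
(3) if `D_r(y) ⊆ D_{1/2}(0)` then `R_β(D_r(y)) = D_{2r}(R_β(y))`. -/
theorem local_ball_dynamics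
    {K : Type*} [NormedField K] [CompleteSpace K] [IsAlgClosed K] [IsUltrametricDist K]
    (h2 : ‖(2 : K)‖ = 1 / 2)
    (a b₁ c₁ : K) (ha : ‖a‖ = 2) (hb₁ : ‖b₁‖ = 1)
    (R : K → K → K) (hRdef : ∀ β z, R β z = (z ^ 2 - z) / (β * z - 1 / a))
    (hc₁ : b₁ * c₁ ^ 2 - (2 / a) * c₁ + 1 / a = 0)
    (hper : (R b₁)^[3] '' Metric.closedBall c₁ (1 / (2 * Real.sqrt 2)) =
      Metric.closedBall c₁ (1 / (2 * Real.sqrt 2)))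
    (β : K) (hβ : ‖β - b₁‖ < 1 / (4 * Real.sqrt 2)) :
    (∀ (y : K) (r : ℝ) (k : ℕ), 1 ≤ k → 0 < r →
        Metric.ball y r ⊆ {z : K | ‖z - c₁‖ = rhoSeq k} →
        ((r ≤ Real.sqrt 2 * rhoSeq k ^ 2 →
            R β '' Metric.ball y r = Metric.ball (R β y) (2 * r * rhoSeq k ^ 2)) ∧
         (Real.sqrt 2 * rhoSeq k ^ 2 < r →
            R β '' Metric.ball y r = Metric.ball (R β y) (Real.sqrt 2 * r ^ 2)))) ∧
    (∀ (y : K) (r : ℝ), 0 < r →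
        Metric.ball y r ⊆ Metric.ball (1 : K) (1 / Real.sqrt 2) →
        R β '' Metric.ball y r = Metric.ball (R β y) r) ∧
    (∀ (y : K) (r : ℝ), 0 < r →
        Metric.ball y r ⊆ Metric.ball (0 : K) (1 / 2) →
        R β '' Metric.ball y r = Metric.ball (R β y) (2 * r)) := by
  clear hper
  -- basic numeric facts about √2
  have hs2sq : Real.sqrt 2 ^ 2 = 2 := Real.sq_sqrt (by norm_num)
  have hs2pos : 0 < Real.sqrt 2 := Real.sqrt_pos.mpr two_pos
  have hs2gt1 : 1 < Real.sqrt 2 := by nlinarith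
  have hs2lt : Real.sqrt 2 < 3/2 := by nlinarith
  have hi1 : (1:ℝ)/2 < 1/Real.sqrt 2 := by
    rw [div_lt_div_iff₀ (by norm_num) hs2pos]; nlinarith
  have hi2 : (1:ℝ)/Real.sqrt 2 < 3/4 := by
    rw [div_lt_div_iff₀ hs2pos (by norm_num)]; nlinarith
  have hi4 : ((1:ℝ)/Real.sqrt 2)^2 = 1/2 := by
    rw [div_pow, hs2sq, one_pow]
  have hipos : (0:ℝ) < 1/Real.sqrt 2 := by positivity
  -- basic facts in K
  have h2K : (2:K) ≠ 0 := by
    intro h; rw [h, norm_zero] at h2; norm_num at h2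
  have haK : a ≠ 0 := by
    intro h; rw [h, norm_zero] at ha; norm_num at ha
  have hina : ‖(1:K)/a‖ = 1/2 := by rw [norm_div, norm_one, ha]
  have hβsmall : ‖β - b₁‖ < 1 / (4 * Real.sqrt 2) := hβ
  have hβhalf : ‖β - b₁‖ < 1/2 := by
    refine hβsmall.trans ?_
    rw [div_lt_div_iff₀ (by positivity) (by norm_num)]
    nlinarith
  have hβn : ‖β‖ = 1 := by
    have hrw : β = b₁ + (β - b₁) := by ring
    rw [hrw, my_add_eq_left (by rw [hb₁]; linarith)]
    exact hb₁
  have hβz : ∀ z : K, ‖β * z‖ = ‖z‖ := by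
    intro z; rw [norm_mul, hβn, one_mul]
  -- norm of c₁
  have hc₁n : ‖c₁‖ = 1 / Real.sqrt 2 := by
    have hrel : b₁ * c₁^2 = (2/a)*c₁ - 1/a := by linear_combination hc₁
    have h2a : ‖(2:K)/a‖ = 1/4 := by rw [norm_div, h2, ha]; norm_num
    have ht2 : ‖c₁‖^2 ≤ max (‖c₁‖/4) (1/2) := by
      calc ‖c₁‖^2 = ‖b₁ * c₁^2‖ := by rw [norm_mul, hb₁, norm_pow, one_mul]
        _ = ‖(2/a)*c₁ - 1/a‖ := by rw [hrel]
        _ ≤ max ‖(2/a)*c₁‖ ‖(1:K)/a‖ := my_norm_sub_le_max _ _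
        _ = max (‖c₁‖/4) (1/2) := by rw [norm_mul, h2a, hina]; ring_nf
    have hle : ‖c₁‖ ≤ 1 / Real.sqrt 2 := by
      by_contra h
      push_neg at h
      rcases le_max_iff.mp ht2 with h' | h'
      · nlinarith [norm_nonneg c₁, hi1, hi4, hipos]
      · nlinarith [norm_nonneg c₁, hi1, hi4, hipos]
    have hlt : ‖(2/a)*c₁‖ < ‖(1:K)/a‖ := by
      rw [norm_mul, h2a, hina]
      linarith [hle, hi2]
    have hsq : ‖c₁‖^2 = 1/2 := by
      calc ‖c₁‖^2 = ‖b₁ * c₁^2‖ := by rw [norm_mul, hb₁, norm_pow, one_mul]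
        _ = ‖(2/a)*c₁ - 1/a‖ := by rw [hrel]
        _ = ‖(1:K)/a‖ := my_sub_eq_right hlt
        _ = 1/2 := hina
    have h' : (‖c₁‖ * Real.sqrt 2 - 1) * (‖c₁‖ * Real.sqrt 2 + 1) = 0 := by nlinarith
    rcases mul_eq_zero.mp h' with h'' | h''
    · field_simp
      linarith [sub_eq_zero.mp h'']
    · nlinarith [norm_nonneg c₁]
  have hwn : ‖b₁ * c₁ - 1/a‖ = 1 / Real.sqrt 2 := by
    have h1 : ‖b₁ * c₁‖ = 1 / Real.sqrt 2 := by rw [norm_mul, hb₁, hc₁n, one_mul]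
    rw [my_sub_eq_left (by rw [h1, hina]; exact hi1), h1]
  -- denominators in the three regions
  have hden3 : ∀ z : K, ‖z‖ < 1/2 → (β*z - 1/a ≠ 0 ∧ ‖β*z - 1/a‖ = 1/2) := by
    intro z hz
    have hn : ‖β*z - 1/a‖ = 1/2 := by
      rw [my_sub_eq_right (by rw [hβz, hina]; exact hz), hina]
    exact ⟨fun h => by rw [h, norm_zero] at hn; norm_num at hn, hn⟩
  have hden2 : ∀ z : K, ‖z - 1‖ < 1/Real.sqrt 2 →
      (‖z‖ = 1 ∧ β*z - 1/a ≠ 0 ∧ ‖β*z - 1/a‖ = 1) := by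
    intro z hz
    have hzn : ‖z‖ = 1 := by
      have hrw : z = 1 + (z - 1) := by ring
      rw [hrw, my_add_eq_left (by rw [norm_one]; exact hz.trans (by nlinarith)), norm_one]
    have hn : ‖β*z - 1/a‖ = 1 := by
      rw [my_sub_eq_left (by rw [hβz, hzn, hina]; norm_num), hβz, hzn]
    exact ⟨hzn, fun h => by rw [h, norm_zero] at hn; norm_num at hn, hn⟩
  have hden1 : ∀ z : K, ‖z - c₁‖ ≤ 1/2 →
      (‖z‖ = 1/Real.sqrt 2 ∧ β*z - 1/a ≠ 0 ∧ ‖β*z - 1/a‖ = 1/Real.sqrt 2) := by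
    intro z hz
    have hzn : ‖z‖ = 1/Real.sqrt 2 := by
      have hrw : z = c₁ + (z - c₁) := by ring
      rw [hrw, my_add_eq_left (by rw [hc₁n]; exact hz.trans_lt hi1), hc₁n]
    have hn : ‖β*z - 1/a‖ = 1/Real.sqrt 2 := by
      rw [my_sub_eq_left (by rw [hβz, hzn, hina]; exact hi1), hβz, hzn]
    refine ⟨hzn, fun h => ?_, hn⟩
    rw [h, norm_zero] at hn
    exact (by positivity : (0:ℝ) < 1/Real.sqrt 2).ne' hn.symm
  -- factorization of R β z - R β w
  have hfac : ∀ z w : K, β*z - 1/a ≠ 0 → β*w - 1/a ≠ 0 →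
      R β z - R β w = ((z - w) * (β*z*w - (z + w - 1)/a)) / ((β*z - 1/a) * (β*w - 1/a)) := by
    intro z w hz hw
    rw [hRdef, hRdef, div_sub_div _ _ hz hw]
    congr 1
    ring
  have himg : ∀ (y : K) (r lam : ℝ),
      (∀ z, dist z y < r → dist (R β z) (R β y) < lam) →
      (∀ c, dist c (R β y) < lam → ∃ z, dist z y < r ∧ R β z = c) →
      R β '' Metric.ball y r = Metric.ball (R β y) lam := by
    intro y r lam h1 h2'
    ext c
    simp only [Set.mem_image, Metric.mem_ball]
    constructor
    · rintro ⟨z, hz, rfl⟩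
      exact h1 z hz
    · intro hc
      obtain ⟨z, hz1, hz2⟩ := h2' c hc
      exact ⟨z, hz1, hz2⟩
  have hRval : ∀ z c : K, β*z - 1/a ≠ 0 → z^2 - z - c*(β*z - 1/a) = 0 → R β z = c := by
    intro z c hd h
    rw [hRdef, div_eq_iff hd]
    linear_combination h
  have hfynorm : ∀ y c : K, β*y - 1/a ≠ 0 →
      ‖(y^2 - y) - c*(β*y - 1/a)‖ = ‖R β y - c‖ * ‖β*y - 1/a‖ := by
    intro y c hd
    rw [← norm_mul]
    congr 1
    rw [hRdef, sub_mul, div_mul_cancel₀ _ hd]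
  have hsolve : ∀ (y c : K) (r M : ℝ), 0 < M → M ≤ ‖2*y - 1 - c*β‖ →
      ‖(y^2 - y) - c*(β*y - 1/a)‖ < r * M →
      ∃ z : K, ‖z - y‖ < r ∧ z^2 - z - c*(β*z - 1/a) = 0 := by
    intro y c r M hM hsum hprod
    obtain ⟨z₁, z₂, hS, hP⟩ := my_quad_roots h2K (1 + c*β) (c/a)
    rw [eq_div_iff haK] at hP
    have hid : ∀ z : K, z^2 - z - c*(β*z - 1/a) = (z - z₁)*(z - z₂) := by
      intro z
      field_simp
      linear_combination (a*z) * hS - hP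
    have hsum' : (y - z₁) + (y - z₂) = 2*y - 1 - c*β := by linear_combination -hS
    have hprod' : ‖(y - z₁) * (y - z₂)‖ < r * M := by rw [← hid y]; exact hprod
    rcases my_pick_root hM (by rw [hsum']; exact hsum) hprod' with h | h
    · exact ⟨z₁, by rwa [norm_sub_rev], by rw [hid z₁, sub_self, zero_mul]⟩
    · exact ⟨z₂, by rwa [norm_sub_rev], by rw [hid z₂, sub_self, mul_zero]⟩
  have hsolve2 : ∀ (y c : K) (r : ℝ), 0 < r →
      ‖(y^2 - y) - c*(β*y - 1/a)‖ < r^2 →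
      ∃ z : K, ‖z - y‖ < r ∧ z^2 - z - c*(β*z - 1/a) = 0 := by
    intro y c r hr hprod
    obtain ⟨z₁, z₂, hS, hP⟩ := my_quad_roots h2K (1 + c*β) (c/a)
    rw [eq_div_iff haK] at hP
    have hid : ∀ z : K, z^2 - z - c*(β*z - 1/a) = (z - z₁)*(z - z₂) := by
      intro z
      field_simp
      linear_combination (a*z) * hS - hP
    have hprod' : ‖(y - z₁) * (y - z₂)‖ < r^2 := by rw [← hid y]; exact hprod
    rcases my_pick_root_sq hr hprod' with h | h
    · exact ⟨z₁, by rwa [norm_sub_rev], by rw [hid z₁, sub_self, zero_mul]⟩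
    · exact ⟨z₂, by rwa [norm_sub_rev], by rw [hid z₂, sub_self, mul_zero]⟩
  -- Part (3)
  have part3 : ∀ (y : K) (r : ℝ), 0 < r →
      Metric.ball y r ⊆ Metric.ball (0 : K) (1/2) →
      R β '' Metric.ball y r = Metric.ball (R β y) (2*r) := by
    intro y r hr hsub
    have hmem : ∀ z ∈ Metric.ball y r, ‖z‖ < 1/2 := by
      intro z hz
      have := hsub hz
      simpa [Metric.mem_ball, dist_zero_right] using this
    have hy : ‖y‖ < 1/2 := hmem y (Metric.mem_ball_self hr)
    obtain ⟨hdy, hdyn⟩ := hden3 y hy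
    have hrle : r ≤ 1/2 := by
      by_contra hr'
      push_neg at hr'
      obtain ⟨x, hx1, hx2⟩ := my_dense h2 (by norm_num : (0:ℝ) < 1/2) hr'
      have hmem' : y + x ∈ Metric.ball y r := by
        rw [Metric.mem_ball, dist_eq_norm, add_sub_cancel_left]
        exact hx2
      have h1 := hmem _ hmem'
      have hxy : ‖y + x‖ = ‖x‖ := my_add_eq_right (hy.trans hx1)
      linarith [hxy ▸ h1]
    apply himg
    · intro z hz
      have hzn := hmem z (Metric.mem_ball.mpr hz)
      obtain ⟨hdz, hdzn⟩ := hden3 z hzn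
      rw [dist_eq_norm] at hz ⊢
      rw [hfac z y hdz hdy, norm_div, norm_mul, norm_mul, hdzn, hdyn]
      have hB : ‖β*z*y - (z + y - 1)/a‖ = 1/2 := by
        have hrw : β*z*y - (z + y - 1)/a = (β*z*y - (z + y)/a) + 1/a := by
          field_simp
          ring
        have h1 : ‖β*z*y‖ < 1/4 := by
          rw [norm_mul, hβz]
          nlinarith [norm_nonneg z, norm_nonneg y]
        have h2' : ‖(z + y)/a‖ < 1/4 := by
          rw [norm_div, ha]
          have := lt_of_le_of_lt (IsUltrametricDist.norm_add_le_max z y) (max_lt hzn hy)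
          linarith
        have h3 : ‖β*z*y - (z + y)/a‖ < 1/2 := by
          refine lt_of_le_of_lt (my_norm_sub_le_max _ _) (max_lt ?_ ?_) <;> linarith
        rw [hrw, my_add_eq_right (by rw [hina]; exact h3), hina]
      rw [hB]
      rw [div_lt_iff₀ (by norm_num)]
      nlinarith
    · intro c hc
      rw [dist_eq_norm] at hc
      have hRy : ‖R β y‖ < 1 := by
        rw [hRdef, norm_div, hdyn]
        have h1 : ‖y^2 - y‖ < 1/2 := by
          refine lt_of_le_of_lt (my_norm_sub_le_max _ _) (max_lt ?_ hy)
          rw [norm_pow]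
          nlinarith [norm_nonneg y]
        rw [div_lt_iff₀ (by norm_num)]
        linarith
      have hcn : ‖c‖ < 1 := by
        have h1 : ‖c - R β y‖ < 1 := hc.trans_le (by linarith)
        have hrw : c = (c - R β y) + R β y := by ring
        rw [hrw]
        exact lt_of_le_of_lt (IsUltrametricDist.norm_add_le_max _ _) (max_lt h1 hRy)
      have hsum : (1:ℝ) ≤ ‖2*y - 1 - c*β‖ := by
        have hrw : 2*y - 1 - c*β = (2*y - c*β) - 1 := by ring
        have h1 : ‖2*y - c*β‖ < 1 := by
          refine lt_of_le_of_lt (my_norm_sub_le_max _ _) (max_lt ?_ ?_)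
          · rw [norm_mul, h2]
            nlinarith [norm_nonneg y]
          · rw [norm_mul, hβn, mul_one]
            exact hcn
        rw [hrw, my_sub_eq_right (by rw [norm_one]; exact h1), norm_one]
      have hprod : ‖(y^2 - y) - c*(β*y - 1/a)‖ < r * 1 := by
        rw [hfynorm y c hdy, hdyn]
        have h1 : ‖R β y - c‖ < 2*r := by rw [norm_sub_rev]; exact hc
        nlinarith [norm_nonneg (R β y - c)]
      obtain ⟨z, hz1, hz2⟩ := hsolve y c r 1 one_pos hsum hprod
      have hzball : z ∈ Metric.ball y r := by
        rw [Metric.mem_ball, dist_eq_norm]; exact hz1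
      exact ⟨z, by rw [dist_eq_norm]; exact hz1, hRval z c (hden3 z (hmem z hzball)).1 hz2⟩
  -- Part (2)
  have part2 : ∀ (y : K) (r : ℝ), 0 < r →
      Metric.ball y r ⊆ Metric.ball (1 : K) (1/Real.sqrt 2) →
      R β '' Metric.ball y r = Metric.ball (R β y) r := by
    intro y r hr hsub
    have hmem : ∀ z ∈ Metric.ball y r, ‖z - 1‖ < 1/Real.sqrt 2 := by
      intro z hz
      have := hsub hz
      simpa [Metric.mem_ball, dist_eq_norm] using this
    have hy : ‖y - 1‖ < 1/Real.sqrt 2 := hmem y (Metric.mem_ball_self hr)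
    obtain ⟨hyn, hdy, hdyn⟩ := hden2 y hy
    have hrle : r ≤ 1/Real.sqrt 2 := by
      by_contra hr'
      push_neg at hr'
      obtain ⟨x, hx1, hx2⟩ := my_dense h2 hipos hr'
      have hmem' : (1:K) + x ∈ Metric.ball y r := by
        rw [Metric.mem_ball, dist_eq_norm]
        have hrw : (1:K) + x - y = x - (y - 1) := by ring
        rw [hrw, my_sub_eq_left (hy.trans hx1)]
        exact hx2
      have h1 := hmem _ hmem'
      have hxy : ‖(1:K) + x - 1‖ = ‖x‖ := by rw [add_sub_cancel_left]
      linarith [hxy ▸ h1]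
    apply himg
    · intro z hz
      have hz1 := hmem z (Metric.mem_ball.mpr hz)
      obtain ⟨hzn, hdz, hdzn⟩ := hden2 z hz1
      rw [dist_eq_norm] at hz ⊢
      rw [hfac z y hdz hdy, norm_div, norm_mul, norm_mul, hdzn, hdyn]
      have hB : ‖β*z*y - (z + y - 1)/a‖ = 1 := by
        have h1 : ‖β*z*y‖ = 1 := by rw [norm_mul, hβz, hzn, hyn, mul_one]
        have h2' : ‖(z + y - 1)/a‖ < 1 := by
          rw [norm_div, ha]
          have hrw : z + y - 1 = (z - 1) + y := by ring
          have h3 : ‖z + y - 1‖ ≤ 1 := by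
            rw [hrw]
            refine le_trans (IsUltrametricDist.norm_add_le_max _ _) (max_le ?_ ?_)
            · linarith [hz1, hi2]
            · exact hyn.le
          linarith
        rw [my_sub_eq_left (by rw [h1]; exact h2'), h1]
      rw [hB]
      simpa using hz
    · intro c hc
      rw [dist_eq_norm] at hc
      have hRy : ‖R β y‖ < 1/Real.sqrt 2 := by
        rw [hRdef, norm_div, hdyn, div_one]
        have hrw : y^2 - y = y * (y - 1) := by ring
        rw [hrw, norm_mul, hyn, one_mul]
        exact hy
      have hcn : ‖c‖ < 1/Real.sqrt 2 := by
        have h1 : ‖c - R β y‖ < 1/Real.sqrt 2 := hc.trans_le hrle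
        have hrw : c = (c - R β y) + R β y := by ring
        rw [hrw]
        exact lt_of_le_of_lt (IsUltrametricDist.norm_add_le_max _ _) (max_lt h1 hRy)
      have hsum : (1:ℝ) ≤ ‖2*y - 1 - c*β‖ := by
        have hrw : 2*y - 1 - c*β = (2*y - c*β) - 1 := by ring
        have h1 : ‖2*y - c*β‖ < 1 := by
          refine lt_of_le_of_lt (my_norm_sub_le_max _ _) (max_lt ?_ ?_)
          · rw [norm_mul, h2, hyn]
            norm_num
          · rw [norm_mul, hβn, mul_one]
            linarith [hcn, hi2]
        rw [hrw, my_sub_eq_right (by rw [norm_one]; exact h1), norm_one]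
      have hprod : ‖(y^2 - y) - c*(β*y - 1/a)‖ < r * 1 := by
        rw [hfynorm y c hdy, hdyn, mul_one, mul_one, norm_sub_rev]
        exact hc
      obtain ⟨z, hz1, hz2⟩ := hsolve y c r 1 one_pos hsum hprod
      have hzball : z ∈ Metric.ball y r := by
        rw [Metric.mem_ball, dist_eq_norm]; exact hz1
      exact ⟨z, by rw [dist_eq_norm]; exact hz1, hRval z c (hden2 z (hmem z hzball)).2.1 hz2⟩
  -- Part (1)
  have hhalf : (1/Real.sqrt 2) * (1/Real.sqrt 2) = (1:ℝ)/2 := by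
    rw [div_mul_div_comm, one_mul, Real.mul_self_sqrt (by norm_num)]
  have part1 : ∀ (y : K) (r : ℝ) (k : ℕ), 1 ≤ k → 0 < r →
      Metric.ball y r ⊆ {z : K | ‖z - c₁‖ = rhoSeq k} →
      ((r ≤ Real.sqrt 2 * rhoSeq k ^ 2 →
          R β '' Metric.ball y r = Metric.ball (R β y) (2 * r * rhoSeq k ^ 2)) ∧
       (Real.sqrt 2 * rhoSeq k ^ 2 < r →
          R β '' Metric.ball y r = Metric.ball (R β y) (Real.sqrt 2 * r ^ 2))) := by
    intro y r k hk hr hsub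
    have hρ1 : 1/(2*Real.sqrt 2) < rhoSeq k := rho_gt k hk
    have hρ2 : rhoSeq k ≤ 1/2 := rho_le k hk
    have hρpos : 0 < rhoSeq k := lt_trans (by positivity) hρ1
    set ρ := rhoSeq k with hρdef
    have hρ1' : 1 < ρ * (2*Real.sqrt 2) := (div_lt_iff₀ (by positivity)).mp hρ1
    have hρsq : 1/8 < ρ^2 := by nlinarith [hs2sq, hs2pos]
    have hhalfρ : ρ/2 < Real.sqrt 2*ρ^2 := by
      have h := mul_lt_mul_of_pos_left hρ1' (show (0:ℝ) < ρ/2 by positivity)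
      rw [mul_one] at h
      nlinarith [h]
    have hconv1 : Real.sqrt 2 * ρ^2 * (1/Real.sqrt 2) = ρ^2 := by field_simp
    have hconvA : 2*r*ρ^2*(1/Real.sqrt 2) = r*(Real.sqrt 2*ρ^2) := by
      field_simp
      linear_combination (-1:ℝ) * hs2sq
    have hconvB : Real.sqrt 2*r^2*(1/Real.sqrt 2) = r^2 := by field_simp
    have hmem : ∀ z ∈ Metric.ball y r, ‖z - c₁‖ = ρ := fun z hz => hsub hz
    have hyΨ : ‖y - c₁‖ = ρ := hmem y (Metric.mem_ball_self hr)
    have hrρ : r ≤ ρ := by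
      by_contra h
      push_neg at h
      have hc₁mem : c₁ ∈ Metric.ball y r := by
        rw [Metric.mem_ball, dist_eq_norm, norm_sub_rev, hyΨ]
        exact h
      have h0 := hmem c₁ hc₁mem
      rw [sub_self, norm_zero] at h0
      linarith
    obtain ⟨hyn, hdy, hdyn⟩ := hden1 y (by rw [hyΨ]; exact hρ2)
    have hdecA : ∀ z : K, β*z*y - (z + y - 1)/a
        = b₁*(z - c₁)*(y - c₁) + ((((z - y) + 2*(y - c₁)))*(b₁*c₁ - 1/a) + (β - b₁)*z*y) := by
      intro z
      have h := hc₁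
      field_simp
      field_simp at h
      linear_combination h
    have hdecB : ∀ z : K, β*z*y - (z + y - 1)/a
        = (((z - y) + 2*(y - c₁)))*(b₁*c₁ - 1/a) + (b₁*(z - c₁)*(y - c₁) + (β - b₁)*z*y) := by
      intro z
      have h := hc₁
      field_simp
      field_simp at h
      linear_combination h
    have ht3 : ∀ z : K, ‖z - c₁‖ = ρ → ‖b₁*(z - c₁)*(y - c₁)‖ = ρ^2 := by
      intro z hz
      rw [norm_mul, norm_mul, hb₁, hz, hyΨ, one_mul, sq]
    have ht4 : ∀ z : K, ‖z - c₁‖ = ρ → ‖(β - b₁)*z*y‖ < ρ^2 := by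
      intro z hz
      obtain ⟨hzn, -, -⟩ := hden1 z (by rw [hz]; exact hρ2)
      rw [norm_mul, norm_mul, hzn, hyn, mul_assoc, hhalf]
      have hq : 1/(4*Real.sqrt 2) < 1/4 := by
        rw [div_lt_div_iff₀ (by positivity) (by norm_num)]
        nlinarith
      linarith only [hβsmall, hq, hρsq]
    have ht2 : ∀ z : K, ‖(((z - y) + 2*(y - c₁)))*(b₁*c₁ - 1/a)‖
        = ‖(z - y) + 2*(y - c₁)‖ * (1/Real.sqrt 2) := by
      intro z
      rw [norm_mul, hwn]
    have h2yc : ‖(2:K)*(y - c₁)‖ = ρ/2 := by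
      rw [norm_mul, h2, hyΨ]
      ring
    have hsum2 : ∀ z : K, ‖(z - y) + 2*(y - c₁)‖ ≤ max (‖z - y‖) (ρ/2) := by
      intro z
      refine le_trans (IsUltrametricDist.norm_add_le_max _ _) ?_
      rw [h2yc]
    have hBub : ∀ z : K, ‖z - c₁‖ = ρ → ‖z - y‖ ≤ Real.sqrt 2 * ρ^2 →
        ‖β*z*y - (z + y - 1)/a‖ ≤ ρ^2 := by
      intro z hz hd
      rw [hdecA z]
      refine le_trans (IsUltrametricDist.norm_add_le_max _ _) (max_le (ht3 z hz).le ?_)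
      refine le_trans (IsUltrametricDist.norm_add_le_max _ _) (max_le ?_ (ht4 z hz).le)
      rw [ht2 z]
      have h5 : max (‖z - y‖) (ρ/2) ≤ Real.sqrt 2 * ρ^2 :=
        max_le hd (by linarith only [hhalfρ])
      calc ‖(z - y) + 2*(y - c₁)‖ * (1/Real.sqrt 2)
          ≤ (Real.sqrt 2 * ρ^2) * (1/Real.sqrt 2) :=
            mul_le_mul_of_nonneg_right ((hsum2 z).trans h5) (by positivity)
        _ = ρ^2 := hconv1
    have hBeq : ∀ z : K, ‖z - c₁‖ = ρ → ‖z - y‖ < Real.sqrt 2 * ρ^2 →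
        ‖β*z*y - (z + y - 1)/a‖ = ρ^2 := by
      intro z hz hd
      have hrest : ‖(((z - y) + 2*(y - c₁)))*(b₁*c₁ - 1/a) + (β - b₁)*z*y‖
          < ‖b₁*(z - c₁)*(y - c₁)‖ := by
        rw [ht3 z hz]
        refine lt_of_le_of_lt (IsUltrametricDist.norm_add_le_max _ _) (max_lt ?_ (ht4 z hz))
        rw [ht2 z]
        have h5 : max (‖z - y‖) (ρ/2) < Real.sqrt 2 * ρ^2 :=
          max_lt hd (by linarith only [hhalfρ])
        calc ‖(z - y) + 2*(y - c₁)‖ * (1/Real.sqrt 2)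
            ≤ max (‖z - y‖) (ρ/2) * (1/Real.sqrt 2) :=
              mul_le_mul_of_nonneg_right (hsum2 z) (by positivity)
          _ < (Real.sqrt 2 * ρ^2) * (1/Real.sqrt 2) :=
              mul_lt_mul_of_pos_right h5 (by positivity)
          _ = ρ^2 := hconv1
      rw [hdecA z, my_add_eq_left hrest, ht3 z hz]
    have hBgt : ∀ z : K, ‖z - c₁‖ = ρ → Real.sqrt 2 * ρ^2 < ‖z - y‖ →
        ‖β*z*y - (z + y - 1)/a‖ = ‖z - y‖ * (1/Real.sqrt 2) := by
      intro z hz hd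
      have hzy : ‖(z - y) + 2*(y - c₁)‖ = ‖z - y‖ := by
        apply my_add_eq_left
        rw [h2yc]
        linarith only [hhalfρ, hd]
      have hρlt : ρ^2 < ‖z - y‖ * (1/Real.sqrt 2) := by
        have h := mul_lt_mul_of_pos_right hd hipos
        linarith only [h, hconv1]
      have hrest : ‖b₁*(z - c₁)*(y - c₁) + (β - b₁)*z*y‖
          < ‖(((z - y) + 2*(y - c₁)))*(b₁*c₁ - 1/a)‖ := by
        rw [ht2 z, hzy]
        refine lt_of_le_of_lt (IsUltrametricDist.norm_add_le_max _ _) (max_lt ?_ ?_)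
        · rw [ht3 z hz]
          exact hρlt
        · exact (ht4 z hz).trans hρlt
      rw [hdecB z, my_add_eq_left hrest, ht2 z, hzy]
    constructor
    · -- case A : r ≤ √2 ρ²
      intro hrA
      apply himg
      · intro z hz
        have hzΨ := hmem z (Metric.mem_ball.mpr hz)
        rw [dist_eq_norm] at hz ⊢
        obtain ⟨hzn, hdz, hdzn⟩ := hden1 z (by rw [hzΨ]; exact hρ2)
        rw [hfac z y hdz hdy, norm_div, norm_mul, norm_mul, hdzn, hdyn, hhalf,
          hBeq z hzΨ (lt_of_lt_of_le hz hrA)]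
        rw [div_lt_iff₀ (by norm_num : (0:ℝ) < 1/2)]
        have h6 : ‖z - y‖ * ρ^2 < r * ρ^2 :=
          mul_lt_mul_of_pos_right hz (by positivity)
        linarith only [h6]
      · intro c hc
        rw [dist_eq_norm] at hc
        have h1 : ‖R β y - c‖ < 2*r*ρ^2 := by rw [norm_sub_rev]; exact hc
        have hfy : ‖(y^2 - y) - c*(β*y - 1/a)‖ < r * (Real.sqrt 2 * ρ^2) := by
          rw [hfynorm y c hdy, hdyn]
          linarith only [mul_lt_mul_of_pos_right h1 hipos, hconvA]
        have hβf : ‖β*((y^2 - y) - c*(β*y - 1/a))‖ < ρ^2 := by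
          rw [norm_mul, hβn, one_mul]
          refine hfy.trans_le ?_
          have h6 : r * (Real.sqrt 2*ρ^2) ≤ (Real.sqrt 2*ρ^2) * (Real.sqrt 2*ρ^2) :=
            mul_le_mul_of_nonneg_right hrA (by positivity)
          have h7 : (Real.sqrt 2*ρ^2) * (Real.sqrt 2*ρ^2) = 2*(ρ^2*ρ^2) := by
            rw [show (Real.sqrt 2*ρ^2)*(Real.sqrt 2*ρ^2)
              = (Real.sqrt 2*Real.sqrt 2)*(ρ^2*ρ^2) from by ring,
              Real.mul_self_sqrt (by norm_num)]
          have h8 : ρ^2 ≤ 1/4 := by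
            rw [show (1:ℝ)/4 = (1/2)^2 by norm_num]
            exact pow_le_pow_left₀ hρpos.le hρ2 2
          have h9 : ρ^2*ρ^2 ≤ (1/4)*ρ^2 := mul_le_mul_of_nonneg_right h8 (by positivity)
          linarith only [h6, h7, h9, sq_nonneg ρ]
        have hByy : ‖β*y*y - (y + y - 1)/a‖ = ρ^2 :=
          hBeq y hyΨ (by rw [sub_self, norm_zero]; positivity)
        have hid2 : (2*y - 1 - c*β)*(β*y - 1/a)
            = (β*y*y - (y + y - 1)/a) + β*((y^2 - y) - c*(β*y - 1/a)) := by
          field_simp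
          ring
        have hnorm : ‖(2*y - 1 - c*β)*(β*y - 1/a)‖ = ρ^2 := by
          rw [hid2, my_add_eq_left (by rw [hByy]; exact hβf), hByy]
        rw [norm_mul, hdyn] at hnorm
        have hX : Real.sqrt 2 * ρ^2 ≤ ‖2*y - 1 - c*β‖ := by
          have := congrArg (fun t : ℝ => t * Real.sqrt 2) hnorm
          have h3 : ‖2*y - 1 - c*β‖ * ((1/Real.sqrt 2) * Real.sqrt 2) = ρ^2 * Real.sqrt 2 := by
            rw [← mul_assoc]
            exact this
          rw [one_div, inv_mul_cancel₀ hs2pos.ne', mul_one] at h3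
          rw [h3]
          ring_nf
          exact le_refl _
        obtain ⟨z, hz1, hz2⟩ := hsolve y c r (Real.sqrt 2 * ρ^2) (by positivity) hX hfy
        have hzc : ‖z - c₁‖ ≤ 1/2 := by
          have hrw : z - c₁ = (z - y) + (y - c₁) := by ring
          rw [hrw]
          refine le_trans (IsUltrametricDist.norm_add_le_max _ _) (max_le ?_ ?_)
          · linarith [hz1, hrρ, hρ2]
          · rw [hyΨ]; exact hρ2
        exact ⟨z, by rw [dist_eq_norm]; exact hz1, hRval z c (hden1 z hzc).2.1 hz2⟩
    · -- case B : √2 ρ² < r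
      intro hrB
      apply himg
      · intro z hz
        have hzΨ := hmem z (Metric.mem_ball.mpr hz)
        rw [dist_eq_norm] at hz ⊢
        obtain ⟨hzn, hdz, hdzn⟩ := hden1 z (by rw [hzΨ]; exact hρ2)
        rw [hfac z y hdz hdy, norm_div, norm_mul, norm_mul, hdzn, hdyn, hhalf]
        rw [div_lt_iff₀ (by norm_num : (0:ℝ) < 1/2)]
        rcases le_or_gt ‖z - y‖ (Real.sqrt 2 * ρ^2) with hd | hd
        · have hB := hBub z hzΨ hd
          have h6 : ‖z - y‖ * ‖β*z*y - (z + y - 1)/a‖ ≤ (Real.sqrt 2 * ρ^2) * ρ^2 :=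
            mul_le_mul hd hB (norm_nonneg _) (by positivity)
          have h7 : (Real.sqrt 2*ρ^2) * (Real.sqrt 2*ρ^2) < r * r :=
            mul_self_lt_mul_self (by positivity) hrB
          have h7' : 2*(ρ^2*ρ^2) < r*r := by
            have heq : (Real.sqrt 2*ρ^2)*(Real.sqrt 2*ρ^2)
                = (Real.sqrt 2*Real.sqrt 2)*(ρ^2*ρ^2) := by ring
            rw [heq, Real.mul_self_sqrt (by norm_num)] at h7
            exact h7
          have h8 := mul_lt_mul_of_pos_left h7'
            (show (0:ℝ) < Real.sqrt 2/2 by positivity)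
          linarith only [h6, h8]
        · rw [hBgt z hzΨ hd]
          have hd2 : ‖z - y‖ * ‖z - y‖ < r * r :=
            mul_self_lt_mul_self (norm_nonneg _) hz
          have hc2 : Real.sqrt 2 * r^2 * (1/2) = r * r * (1/Real.sqrt 2) := by
            field_simp
            linear_combination hs2sq
          calc ‖z - y‖ * (‖z - y‖ * (1/Real.sqrt 2))
              = ‖z - y‖ * ‖z - y‖ * (1/Real.sqrt 2) := by ring
            _ < r * r * (1/Real.sqrt 2) := mul_lt_mul_of_pos_right hd2 hipos
            _ = Real.sqrt 2 * r^2 * (1/2) := hc2.symm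
      · intro c hc
        rw [dist_eq_norm] at hc
        have h1 : ‖R β y - c‖ < Real.sqrt 2 * r^2 := by rw [norm_sub_rev]; exact hc
        have hfy : ‖(y^2 - y) - c*(β*y - 1/a)‖ < r^2 := by
          rw [hfynorm y c hdy, hdyn]
          linarith only [mul_lt_mul_of_pos_right h1 hipos, hconvB]
        obtain ⟨z, hz1, hz2⟩ := hsolve2 y c r hr hfy
        have hzc : ‖z - c₁‖ ≤ 1/2 := by
          have hrw : z - c₁ = (z - y) + (y - c₁) := by ring
          rw [hrw]
          refine le_trans (IsUltrametricDist.norm_add_le_max _ _) (max_le ?_ ?_)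
          · linarith [hz1, hrρ, hρ2]
          · rw [hyΨ]; exact hρ2
        exact ⟨z, by rw [dist_eq_norm]; exact hz1, hRval z c (hden1 z hzc).2.1 hz2⟩
  exact ⟨part1, part2, part3⟩
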